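/- arXiv:hep-th/9907176 — 3 statements merged into one kernel-verified Lean document; each statement's English description precedes it below -/
import Mathlib

section
/- If y : [t₁,∞) → ℝ is continuous, y is bounded, y' → 0, and 2ℓπ cos(y(t)) − sin(y(t)) → 0 as t → ∞, then y(t) converges and its limit L satisfies tan L = 2ℓπ, i.e. L = arctan(2πℓ) + mπ for some integer m. -/
open Real Set Filter

/-- if `y` is bounded with `y' → 0` and
`2ℓπ cos(y(t)) − sin(y(t)) → 0` as `t → ∞`, then `y(t)` converges to a limit `L`
with `L = arctan(2πℓ) + mπ` for some integer `m`. -/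
theorem stmt13 (t₁ M : ℝ) (ℓ : ℤ) (y z : ℝ → ℝ)
    (hy : ∀ t ∈ Set.Ici t₁, HasDerivAt y (z t) t)
    (hbd : ∀ t ∈ Set.Ici t₁, |y t| ≤ M)
    (hz0 : Tendsto z atTop (nhds 0))
    (hlim : Tendsto (fun t => 2 * (ℓ : ℝ) * π * Real.cos (y t) - Real.sin (y t))
      atTop (nhds 0)) :
    ∃ L : ℝ, Tendsto y atTop (nhds L) ∧ ∃ m : ℤ, L = Real.arctan (2 * π * ℓ) + m * π := by
  set c : ℝ := 2 * π * (ℓ : ℝ) with hc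
  set a : ℝ := Real.arctan c with ha
  have hπ : (0 : ℝ) < π := Real.pi_pos
  have key : ∀ u : ℝ, Real.sin (u - a) =
      (Real.sin u - c * Real.cos u) / Real.sqrt (1 + c ^ 2) := by
    intro u
    rw [Real.sin_sub, ha, Real.cos_arctan, Real.sin_arctan]
    field_simp
  -- sin (y t - a) → 0
  have hsin : Tendsto (fun t => Real.sin (y t - a)) atTop (nhds 0) := by
    have h1 : Tendsto (fun t =>
        -(2 * (ℓ : ℝ) * π * Real.cos (y t) - Real.sin (y t)) / Real.sqrt (1 + c ^ 2))
        atTop (nhds 0) := by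
      simpa using hlim.neg.div_const (Real.sqrt (1 + c ^ 2))
    refine h1.congr fun t => ?_
    rw [key (y t)]
    congr 1
    ring
  -- eventually |sin (y t - a)| < 1 and t ≥ t₁
  have hev : ∀ᶠ t in atTop, |Real.sin (y t - a)| < 1 ∧ t₁ ≤ t := by
    have h1 : ∀ᶠ t in atTop, |Real.sin (y t - a)| < 1 := by
      have := (Metric.tendsto_nhds.1 hsin) 1 one_pos
      simpa [Real.dist_eq] using this
    exact h1.and (eventually_ge_atTop t₁)
  obtain ⟨T, hT⟩ := eventually_atTop.1 hev
  have hT1 : t₁ ≤ T := (hT T le_rfl).2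
  have hsinT : ∀ t, T ≤ t → |Real.sin (y t - a)| < 1 := fun t ht => (hT t ht).1
  -- continuity
  have hcont : ∀ t ∈ Set.Ici T, ContinuousAt y t := fun t ht =>
    (hy t (le_trans hT1 ht)).continuousAt
  have hwcont : ∀ t : ℝ, ContinuousOn (fun s => y s - a) (Set.Icc T t) := by
    intro t
    apply ContinuousOn.sub _ continuousOn_const
    intro u hu
    exact (hcont u hu.1).continuousWithinAt
  set m : ℤ := round ((y T - a) / π) with hm
  have hcm : Real.cos ((m : ℝ) * π) = (-1 : ℝ) ^ m := by
    simpa using Real.cos_int_mul_pi_sub 0 m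
  -- y t - a never hits kπ ± π/2 for t ≥ T
  have habs1 : ∀ t, T ≤ t → ∀ k : ℤ,
      y t - a ≠ k * π + π / 2 ∧ y t - a ≠ k * π - π / 2 := by
    intro t ht k
    constructor <;> intro hEq <;> apply absurd (hsinT t ht)
    · have h1 : Real.sin (y t - a) = (-1 : ℝ) ^ k * Real.sin (π / 2) := by
        rw [hEq, add_comm, Real.sin_add_int_mul_pi]
      rw [h1, Real.sin_pi_div_two]
      have hk : |((-1 : ℝ) ^ k)| = 1 := by
        rcases Int.even_or_odd k with hk | hk
        · rw [hk.neg_zpow, one_zpow, abs_one]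
        · rw [hk.neg_one_zpow, abs_neg, abs_one]
      simp [abs_mul, hk]
    · have h1 : Real.sin (y t - a) = (-1 : ℝ) ^ k * Real.sin (-(π / 2)) := by
        rw [hEq, sub_eq_add_neg, add_comm, Real.sin_add_int_mul_pi]
      rw [h1]
      have hk : |((-1 : ℝ) ^ k)| = 1 := by
        rcases Int.even_or_odd k with hk | hk
        · rw [hk.neg_zpow, one_zpow, abs_one]
        · rw [hk.neg_one_zpow, abs_neg, abs_one]
      simp [abs_mul, hk]
  -- |y T - a - m π| < π/2
  have hwT : |y T - a - m * π| < π / 2 := by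
    have h1 : |(y T - a) / π - m| ≤ 1 / 2 := abs_sub_round ((y T - a) / π)
    have h2 : |y T - a - m * π| ≤ π / 2 := by
      have e : y T - a - m * π = ((y T - a) / π - m) * π := by
        field_simp
      rw [e, abs_mul, abs_of_pos hπ]
      nlinarith [h1]
    rcases lt_or_eq_of_le h2 with h | h
    · exact h
    · exfalso
      rcases (abs_eq (by positivity : (0:ℝ) ≤ π / 2)).1 h with h' | h'
      · exact (habs1 T le_rfl m).1 (by linarith)
      · exact (habs1 T le_rfl m).2 (by linarith)
  -- y t - a stays in (mπ - π/2, mπ + π/2) for t ≥ T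
  have hstay : ∀ t, T ≤ t → |y t - a - m * π| < π / 2 := by
    intro t ht
    by_contra hcon
    push_neg at hcon
    have hwT' := abs_lt.1 hwT
    rcases le_abs.1 hcon with h | h
    · have hmem : (m : ℝ) * π + π / 2 ∈
          Set.Icc ((fun s => y s - a) T) ((fun s => y s - a) t) := by
        simp only [Set.mem_Icc]
        constructor <;> linarith [hwT'.2]
      obtain ⟨u, hu, hwu⟩ := intermediate_value_Icc ht (hwcont t) hmem
      exact (habs1 u hu.1 m).1 hwu
    · have hmem : (m : ℝ) * π - π / 2 ∈
          Set.Icc ((fun s => y s - a) t) ((fun s => y s - a) T) := by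
        simp only [Set.mem_Icc]
        constructor <;> linarith [hwT'.1]
      obtain ⟨u, hu, hwu⟩ := intermediate_value_Icc' ht (hwcont t) hmem
      exact (habs1 u hu.1 m).2 hwu
  -- conclude convergence
  refine ⟨a + m * π, ?_, m, by rw [ha, hc]⟩
  have harc : Tendsto (fun t => Real.arcsin ((-1 : ℝ) ^ m * Real.sin (y t - a)))
      atTop (nhds 0) := by
    have h1 : Tendsto (fun t => (-1 : ℝ) ^ m * Real.sin (y t - a)) atTop (nhds 0) := by
      simpa using hsin.const_mul ((-1 : ℝ) ^ m)
    have := (Real.continuous_arcsin.tendsto 0).comp h1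
    simpa [Function.comp_def] using this
  have heq : ∀ᶠ t in atTop, Real.arcsin ((-1 : ℝ) ^ m * Real.sin (y t - a))
      = y t - a - m * π := by
    filter_upwards [eventually_ge_atTop T] with t ht
    have h1 : Real.sin (y t - a - m * π) = (-1 : ℝ) ^ m * Real.sin (y t - a) := by
      rw [Real.sin_sub, Real.sin_int_mul_pi, hcm]
      ring
    rw [← h1]
    have h2 := abs_lt.1 (hstay t ht)
    exact Real.arcsin_sin (by linarith [h2.1]) (by linarith [h2.2])
  have hfin : Tendsto (fun t => y t - a - m * π) atTop (nhds 0) := harc.congr' heq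
  have hfin2 := hfin.add_const (a + m * π)
  simp only [zero_add] at hfin2
  refine hfin2.congr fun t => ?_
  ring
end

section
/- Damped pendulum: every solution of y'' + y' − 2 sin y = 0 that is bounded on (−∞, ∞) has limits at both ±∞, and each limit is an integer multiple of π. -/
open Real Set Filter Topology

/-!
The energy `E = z ^ 2 / 2 + 2 cos y` has `E' = -z ^ 2 ≤ 0`, and it is bounded because `z` is, so
it converges at `±∞`. By Barbalat's lemma (a uniformly continuous derivative of a convergent
function tends to `0`) first `z ^ 2 = -E'` and then `z' = -z + 2 sin y` tend to `0`, hence so does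
`sin y`. Once `|sin y| < 1`, the continuous `y` can no longer cross an odd multiple of `π / 2`, so it
stays within `π / 2` of one multiple `k π`, and `sin y → 0` forces `y → k π`.
-/

lemma lipschitzWith_of_hasDerivAt_of_abs_le {f f' : ℝ → ℝ} {C : ℝ}
    (hf : ∀ x, HasDerivAt f (f' x) x) (hC : ∀ x, |f' x| ≤ C) : LipschitzWith C.toNNReal f :=
  LipschitzWith.of_dist_le' fun a b =>
    convex_univ.norm_image_sub_le_of_norm_hasDerivWithin_le (fun x _ => (hf x).hasDerivWithinAt)
      (fun x _ => hC x) (mem_univ b) (mem_univ a)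

/-- Barbalat's lemma. -/
lemma tendsto_zero_of_hasDerivAt_of_uniformContinuous {F f : ℝ → ℝ} {l : Filter ℝ} {L : ℝ}
    (hF : ∀ t, HasDerivAt F (f t) t) (hf : UniformContinuous f) (hFL : Tendsto F l (𝓝 L))
    (hl : ∀ δ, Tendsto (· + δ) l l) : Tendsto f l (𝓝 0) := by
  rw [Metric.tendsto_nhds]
  intro ε hε
  obtain ⟨δ, hδ, hfδ⟩ := Metric.uniformContinuous_iff.1 hf (ε / 2) (half_pos hε)
  set h := δ / 2 with hdef
  have hh : 0 < h := half_pos hδ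
  have hincr : Tendsto (fun t => F (t + h) - F t) l (𝓝 0) := by
    simpa using (hFL.comp (hl h)).sub hFL
  filter_upwards [Metric.tendsto_nhds.1 hincr (h * (ε / 2)) (by positivity)] with t ht
  obtain ⟨ξ, hξ, hfξ⟩ := exists_hasDerivAt_eq_slope F f (lt_add_of_pos_right t hh)
    (fun x _ => (hF x).continuousAt.continuousWithinAt) (fun x _ => hF x)
  have hclose : |f t - f ξ| < ε / 2 := by
    refine hfδ ?_
    rw [Real.dist_eq, abs_sub_comm, abs_of_pos (by linarith [hξ.1])]
    linarith [hξ.2]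
  have hslope : |f ξ| < ε / 2 := by
    rw [hfξ, add_sub_cancel_left, abs_div, abs_of_pos hh, div_lt_iff₀ hh, mul_comm]
    simpa using ht
  rw [Real.dist_eq, sub_zero]
  linarith [abs_sub_abs_le_abs_sub (f t) (f ξ)]

lemma tendsto_add_const_self {l : Filter ℝ} (hl : l = atTop ∨ l = atBot) (δ : ℝ) :
    Tendsto (· + δ) l l := by
  rcases hl with rfl | rfl
  · exact tendsto_atTop_add_const_right _ δ tendsto_id
  · exact tendsto_atBot_add_const_right _ δ tendsto_id

lemma abs_sin_sub_int_mul_pi (x : ℝ) (k : ℤ) : |sin (x - k * π)| = |sin x| := by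
  rw [sin_sub_int_mul_pi, abs_mul, abs_zpow, abs_neg, abs_one, one_zpow, one_mul]

lemma exists_tendsto_int_mul_pi_of_tendsto_sin {y : ℝ → ℝ} (hy : Continuous y)
    (h : Tendsto (fun t => sin (y t)) atTop (𝓝 0)) : ∃ k : ℤ, Tendsto y atTop (𝓝 (k * π)) := by
  obtain ⟨T, hT⟩ : ∃ T, ∀ t ≥ T, |sin (y t)| < 1 := by
    simpa [Real.dist_eq] using Metric.tendsto_atTop.1 h 1 one_pos
  set k := round (y T / π)
  have hne : ∀ t ≥ T, |y t - k * π| ≠ π / 2 := by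
    intro t ht heq
    have hsin : |sin (y t)| = 1 := by
      rw [← abs_sin_sub_int_mul_pi _ k]
      rcases abs_eq (by positivity) |>.1 heq with h | h <;> simp [h]
    linarith [hT t ht]
  have hT0 : |y T - k * π| < π / 2 := by
    refine lt_of_le_of_ne ?_ (hne T le_rfl)
    have hround := abs_sub_round (y T / π)
    rw [show y T - k * π = (y T / π - k) * π by field_simp, abs_mul, abs_of_pos pi_pos]
    nlinarith [pi_pos]
  have hband : ∀ t ≥ T, |y t - k * π| < π / 2 := by
    intro t ht
    by_contra! hge
    obtain ⟨u, hu, hyu⟩ := intermediate_value_Icc ht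
      (continuous_abs.comp (hy.sub continuous_const)).continuousOn ⟨hT0.le, hge⟩
    exact hne u hu.1 hyu
  have hsin : Tendsto (fun t => sin (y t - k * π)) atTop (𝓝 0) := by
    rw [tendsto_zero_iff_abs_tendsto_zero] at h ⊢
    simpa only [Function.comp_def, abs_sin_sub_int_mul_pi] using h
  have harcsin : (fun t => arcsin (sin (y t - k * π))) =ᶠ[atTop] fun t => y t - k * π :=
    eventually_atTop.2 ⟨T, fun t ht => arcsin_sin (by linarith [abs_lt.1 (hband t ht)])
      (abs_lt.1 (hband t ht)).2.le⟩
  have hsub : Tendsto (fun t => y t - k * π) atTop (𝓝 0) := by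
    simpa using ((continuous_arcsin.tendsto 0).comp hsin).congr' harcsin
  exact ⟨k, by simpa using hsub.add_const (k * π)⟩

lemma exists_tendsto_atBot_int_mul_pi_of_tendsto_sin {y : ℝ → ℝ} (hy : Continuous y)
    (h : Tendsto (fun t => sin (y t)) atBot (𝓝 0)) : ∃ k : ℤ, Tendsto y atBot (𝓝 (k * π)) := by
  obtain ⟨k, hk⟩ := exists_tendsto_int_mul_pi_of_tendsto_sin (hy.comp continuous_neg)
    (h.comp tendsto_neg_atTop_atBot)
  exact ⟨k, by simpa [Function.comp_def] using hk.comp tendsto_neg_atBot_atTop⟩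

noncomputable def pendulumEnergy (y z : ℝ → ℝ) (t : ℝ) : ℝ := z t ^ 2 / 2 + 2 * cos (y t)

lemma abs_neg_add_two_mul_sin_le {a B : ℝ} (ha : |a| ≤ B) (x : ℝ) :
    |-a + 2 * sin x| ≤ B + 2 := by
  have h2 : |2 * sin x| ≤ 2 := by rw [abs_mul, abs_two]; linarith [abs_sin_le_one x]
  linarith [abs_add_le (-a) (2 * sin x), abs_neg a]

section DampedPendulum

variable {y z : ℝ → ℝ}

/-- The velocity bound comes from `y + z`, whose derivative `2 sin y` is bounded, together with
a mean-value point in `[t - 1, t]` where `|z| ≤ 2M`. -/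
lemma pendulum_abs_velocity_le (hy : ∀ t, HasDerivAt y (z t) t)
    (hz : ∀ t, HasDerivAt z (-(z t) + 2 * sin (y t)) t) {M : ℝ} (hM : ∀ t, |y t| ≤ M) (t : ℝ) :
    |z t| ≤ 4 * M + 2 := by
  obtain ⟨s, hs, hzs⟩ := exists_hasDerivAt_eq_slope y z (sub_one_lt t)
    (fun x _ => (hy x).continuousAt.continuousWithinAt) (fun x _ => hy x)
  have hzs' : |z s| ≤ 2 * M := by
    rw [hzs, sub_sub_cancel, div_one]
    linarith [abs_sub (y t) (y (t - 1)), hM t, hM (t - 1)]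
  have hw : LipschitzWith (2 : ℝ).toNNReal (fun u => y u + z u) :=
    lipschitzWith_of_hasDerivAt_of_abs_le (f' := fun u => 2 * sin (y u))
      (fun u => ((hy u).add (hz u)).congr_deriv (by ring))
      (fun u => by rw [abs_mul, abs_two]; linarith [abs_sin_le_one (y u)])
  have hws : |(y t + z t) - (y s + z s)| ≤ 2 := by
    have hts : |t - s| ≤ 1 := abs_le.2 ⟨by linarith [hs.2], by linarith [hs.1]⟩
    have := hw.dist_le_mul t s
    rw [Real.coe_toNNReal _ two_pos.le, Real.dist_eq, Real.dist_eq] at this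
    linarith
  have hsplit : z t = (y t + z t - (y s + z s)) + z s + y s - y t := by ring
  rw [hsplit]
  linarith [abs_sub (y t + z t - (y s + z s) + z s + y s) (y t),
    abs_add_three (y t + z t - (y s + z s)) (z s) (y s), hM s, hM t]

lemma hasDerivAt_pendulumEnergy (hy : ∀ t, HasDerivAt y (z t) t)
    (hz : ∀ t, HasDerivAt z (-(z t) + 2 * sin (y t)) t) (t : ℝ) :
    HasDerivAt (pendulumEnergy y z) (-(z t ^ 2)) t :=
  ((((hz t).pow 2).div_const 2).add ((hy t).cos.const_mul 2)).congr_deriv (by push_cast; ring)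

lemma pendulum_exists_tendsto_energy (hy : ∀ t, HasDerivAt y (z t) t)
    (hz : ∀ t, HasDerivAt z (-(z t) + 2 * sin (y t)) t) {B : ℝ} (hB : ∀ t, |z t| ≤ B)
    {l : Filter ℝ} (hl : l = atTop ∨ l = atBot) : ∃ L, Tendsto (pendulumEnergy y z) l (𝓝 L) := by
  have hanti : Antitone (pendulumEnergy y z) :=
    antitone_of_hasDerivAt_nonpos (hasDerivAt_pendulumEnergy hy hz) fun t => by
      simpa using sq_nonneg (z t)
  have hlower : ∀ t, -2 ≤ pendulumEnergy y z t := fun t => by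
    unfold pendulumEnergy; nlinarith [neg_one_le_cos (y t), sq_nonneg (z t)]
  have hupper : ∀ t, pendulumEnergy y z t ≤ B ^ 2 / 2 + 2 := fun t => by
    have := sq_le_sq' (abs_le.1 (hB t)).1 (abs_le.1 (hB t)).2
    unfold pendulumEnergy; nlinarith [cos_le_one (y t)]
  rcases hl with rfl | rfl
  · exact ⟨_, tendsto_atTop_ciInf hanti ⟨-2, by rintro _ ⟨t, rfl⟩; exact hlower t⟩⟩
  · exact ⟨_, tendsto_atBot_ciSup hanti ⟨_, by rintro _ ⟨t, rfl⟩; exact hupper t⟩⟩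

lemma pendulum_tendsto_velocity (hy : ∀ t, HasDerivAt y (z t) t)
    (hz : ∀ t, HasDerivAt z (-(z t) + 2 * sin (y t)) t) {B : ℝ} (hB : ∀ t, |z t| ≤ B)
    {l : Filter ℝ} (hl : l = atTop ∨ l = atBot) : Tendsto z l (𝓝 0) := by
  obtain ⟨L, hL⟩ := pendulum_exists_tendsto_energy hy hz hB hl
  have hacc (t : ℝ) := abs_neg_add_two_mul_sin_le (hB t) (y t)
  have hsq : UniformContinuous fun t => -(z t ^ 2) := by
    refine (lipschitzWith_of_hasDerivAt_of_abs_le (C := 2 * (B * (B + 2)))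
      (f' := fun t => -(2 * (z t * (-(z t) + 2 * sin (y t)))))
      (fun t => ((hz t).pow 2).neg.congr_deriv (by push_cast; ring)) fun t => ?_).uniformContinuous
    have := mul_le_mul (hB t) (hacc t) (abs_nonneg _) ((abs_nonneg _).trans (hB t))
    rw [abs_neg, abs_mul, abs_two, abs_mul]
    linarith
  have hsq0 : Tendsto (fun t => z t ^ 2) l (𝓝 0) := by
    simpa using (tendsto_zero_of_hasDerivAt_of_uniformContinuous
      (hasDerivAt_pendulumEnergy hy hz) hsq hL (tendsto_add_const_self hl)).neg
  rw [tendsto_zero_iff_abs_tendsto_zero]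
  simpa [Function.comp_def, sqrt_sq_eq_abs] using (continuous_sqrt.tendsto 0).comp hsq0

lemma pendulum_tendsto_sin (hy : ∀ t, HasDerivAt y (z t) t)
    (hz : ∀ t, HasDerivAt z (-(z t) + 2 * sin (y t)) t) {B : ℝ} (hB : ∀ t, |z t| ≤ B)
    {l : Filter ℝ} (hl : l = atTop ∨ l = atBot) : Tendsto (fun t => sin (y t)) l (𝓝 0) := by
  have hz0 := pendulum_tendsto_velocity hy hz hB hl
  have hacc : UniformContinuous fun t => -(z t) + 2 * sin (y t) := by
    refine (lipschitzWith_of_hasDerivAt_of_abs_le (C := 3 * B + 2)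
      (fun t => (hz t).neg.add ((hy t).sin.const_mul 2)) fun t => ?_).uniformContinuous
    have hcos : |2 * (cos (y t) * z t)| ≤ 2 * B := by
      rw [abs_mul, abs_two, abs_mul]
      linarith [mul_le_mul (abs_cos_le_one (y t)) (hB t) (abs_nonneg _) zero_le_one]
    linarith [abs_add_le (-(-(z t) + 2 * sin (y t))) (2 * (cos (y t) * z t)),
      abs_neg (-(z t) + 2 * sin (y t)), abs_neg_add_two_mul_sin_le (hB t) (y t)]
  have hacc0 := tendsto_zero_of_hasDerivAt_of_uniformContinuous hz hacc hz0
    (tendsto_add_const_self hl)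
  simpa using ((hacc0.add hz0).div_const 2).congr fun t => by ring

end DampedPendulum

/-- damped pendulum: every solution of `y'' + y' − 2 sin y = 0` that is
bounded on `(−∞,∞)` has limits at both `±∞`, each an integer multiple of `π`. -/
theorem stmt15 (y z : ℝ → ℝ)
    (hy : ∀ t : ℝ, HasDerivAt y (z t) t)
    (hz : ∀ t : ℝ, HasDerivAt z (-(z t) + 2 * Real.sin (y t)) t)
    (hbd : ∃ M : ℝ, ∀ t : ℝ, |y t| ≤ M) :
    ∃ Lp Lm : ℝ, Tendsto y atTop (nhds Lp) ∧ Tendsto y atBot (nhds Lm) ∧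
      (∃ m : ℤ, Lp = m * π) ∧ (∃ n : ℤ, Lm = n * π) := by
  obtain ⟨M, hM⟩ := hbd
  have hB := pendulum_abs_velocity_le hy hz hM
  have hyc : Continuous y := continuous_iff_continuousAt.2 fun t => (hy t).continuousAt
  obtain ⟨m, hm⟩ := exists_tendsto_int_mul_pi_of_tendsto_sin hyc
    (pendulum_tendsto_sin hy hz hB (.inl rfl))
  obtain ⟨n, hn⟩ := exists_tendsto_atBot_int_mul_pi_of_tendsto_sin hyc
    (pendulum_tendsto_sin hy hz hB (.inr rfl))
  exact ⟨_, _, hm, hn, ⟨m, rfl⟩, ⟨n, rfl⟩⟩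
end

section
/- Linear comparison lemma: suppose δ : ℝ → ℝ is C², bounded on ℝ, and satisfies |δ''(u) + δ'(u) − 2δ(u)| ≤ C e^{−α|u|} for all u, with constants C > 0 and 0 < α (α ≠ 1, 2). Then |δ(u)| ≤ A e^{αu} + B e^{u} for u → −∞ and |δ(u)| ≤ A' e^{−αu} + B' e^{−2u} for u → +∞, for suitable constants A, B, A', B'; in particular δ(u) → 0 as u → ±∞. -/
/-!
For `a > 0` the operator `L = D² + b D - a` obeys a minimum principle on `[0, ∞)`: a function that
is bounded below, with `L g ≤ 0` and `g 0 ≥ 0`, is nonnegative. On a compact interval this is the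
second-derivative test at a negative interior minimum, where `L g = g'' - a g > 0`; on the half line
one first adds `ε e^{s u}`, with `s > 0` the positive root of `s² + b s = a`, which is annihilated
by `L` and pushes the minimum into a compact interval.

Applied to `w ∓ δ`, where `w = A e^{-c u} + B e^{r u}`, `r` is a characteristic root and `A` is
chosen so that `L (A e^{-c u}) = -C e^{-c u}`, this bounds `|δ|` by `w` on `[0, ∞)` (here `b = 1`,
`r = -2`). At `-∞` the same applies to `u ↦ δ (-u)`, which satisfies the equation with `b = -1`,
`r = -1`.
-/

open Real Set Filter Topology

theorem IsLocalMin.second_deriv_nonneg {f f' : ℝ → ℝ} {f'' x : ℝ} (hmin : IsLocalMin f x)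
    (hf : ∀ y, HasDerivAt f (f' y) y) (hf' : HasDerivAt f' f'' x) : 0 ≤ f'' := by
  by_contra! hneg
  have hzero : f' x = 0 := hmin.hasDerivAt_eq_zero (hf x)
  have hdecr : ∀ᶠ y in 𝓝[>] x, f' y < 0 := by
    filter_upwards [nhdsGT_le_nhdsNE x <|
      (hasDerivAt_iff_tendsto_slope.mp hf').eventually (eventually_lt_nhds hneg),
      self_mem_nhdsWithin] with y hslope hxy
    have := mul_neg_of_neg_of_pos hslope (sub_pos.2 hxy)
    rwa [slope_def_field, hzero, sub_zero, div_mul_cancel₀ _ (sub_ne_zero.2 hxy.ne')] at this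
  obtain ⟨b, hxb, hb⟩ :=
    mem_nhdsGT_iff_exists_Ioo_subset.mp (hdecr.and (nhdsWithin_le_nhds hmin))
  have hxy : x < (x + b) / 2 := by linarith [mem_Ioi.mp hxb]
  obtain ⟨c, hc, hslope⟩ := exists_hasDerivAt_eq_slope f f' hxy
    (fun y _ => (hf y).continuousAt.continuousWithinAt) (fun y _ => hf y)
  have hfc : f' c < 0 := (hb ⟨hc.1, hc.2.trans (by linarith [mem_Ioi.mp hxb])⟩).1
  have hfy : f x ≤ f ((x + b) / 2) := (hb ⟨hxy, by linarith [mem_Ioi.mp hxb]⟩).2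
  rw [hslope] at hfc
  exact hfc.not_ge (div_nonneg (sub_nonneg.2 hfy) (sub_nonneg.2 hxy.le))

theorem exists_pos_sq_add_mul_eq {a : ℝ} (ha : 0 < a) (b : ℝ) : ∃ s > 0, s ^ 2 + b * s = a := by
  have hdisc : 0 ≤ b ^ 2 + 4 * a := by positivity
  refine ⟨(√(b ^ 2 + 4 * a) - b) / 2, ?_, ?_⟩
  · have : |b| < √(b ^ 2 + 4 * a) := by
      rw [← sqrt_sq_eq_abs]
      exact sqrt_lt_sqrt (sq_nonneg b) (by linarith)
    linarith [le_abs_self b]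
  · linear_combination (1 / 4 : ℝ) * sq_sqrt hdisc

theorem hasDerivAt_exp_const_mul (s x : ℝ) :
    HasDerivAt (fun x => exp (s * x)) (s * exp (s * x)) x := by
  simpa [mul_comm] using ((hasDerivAt_id x).const_mul s).exp

theorem min_principle_Icc {a b p q : ℝ} (ha : 0 < a) {g g' g'' : ℝ → ℝ}
    (hg : ∀ u, HasDerivAt g (g' u) u) (hg' : ∀ u, HasDerivAt g' (g'' u) u)
    (hL : ∀ u ∈ Ioo p q, g'' u + b * g' u - a * g u ≤ 0) (hp : 0 ≤ g p) (hq : 0 ≤ g q) :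
    ∀ u ∈ Icc p q, 0 ≤ g u := by
  by_contra! ⟨u₁, hu₁, hneg⟩
  have hcont : Continuous g := continuous_iff_continuousAt.2 fun u => (hg u).continuousAt
  obtain ⟨u₀, hu₀, hmin⟩ := isCompact_Icc.exists_isMinOn ⟨u₁, hu₁⟩ hcont.continuousOn
  have hgu₀ : g u₀ < 0 := (hmin hu₁).trans_lt hneg
  have hu₀' : u₀ ∈ Ioo p q :=
    ⟨hu₀.1.lt_of_ne (by rintro rfl; linarith), hu₀.2.lt_of_ne (by rintro rfl; linarith)⟩
  have hloc : IsLocalMin g u₀ := hmin.isLocalMin (Icc_mem_nhds hu₀'.1 hu₀'.2)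
  have h₁ := hloc.hasDerivAt_eq_zero (hg u₀)
  have h₂ := hloc.second_deriv_nonneg hg (hg' u₀)
  have hLu₀ := hL u₀ hu₀'
  rw [h₁, mul_zero, add_zero] at hLu₀
  nlinarith [mul_pos ha (neg_pos.2 hgu₀)]

theorem min_principle_Ici {a b : ℝ} (ha : 0 < a) {g g' g'' : ℝ → ℝ}
    (hg : ∀ u, HasDerivAt g (g' u) u) (hg' : ∀ u, HasDerivAt g' (g'' u) u)
    (hbdd : BddBelow (g '' Ici 0)) (hL : ∀ u > 0, g'' u + b * g' u - a * g u ≤ 0)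
    (h0 : 0 ≤ g 0) : ∀ u ≥ 0, 0 ≤ g u := by
  obtain ⟨s, hs, hroot⟩ := exists_pos_sq_add_mul_eq ha b
  obtain ⟨M, hM⟩ := hbdd
  intro u hu
  refine le_of_forall_pos_le_add fun ε hε => ?_
  set η := ε / exp (s * u)
  have hη : 0 < η := by positivity
  set G := fun x => g x + η * exp (s * x)
  have hG_top : Tendsto G atTop atTop :=
    tendsto_atTop_add_left_of_le' _ M
      ((eventually_ge_atTop 0).mono fun x hx => hM ⟨x, hx, rfl⟩)
      ((tendsto_exp_atTop.comp (tendsto_id.const_mul_atTop hs)).const_mul_atTop hη)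
  obtain ⟨R, hR, hRu⟩ := ((hG_top.eventually_ge_atTop 0).and (eventually_ge_atTop u)).exists
  have := min_principle_Icc ha (b := b) (g := G)
    (fun x => (hg x).add ((hasDerivAt_exp_const_mul s x).const_mul η))
    (fun x => (hg' x).add (((hasDerivAt_exp_const_mul s x).const_mul s).const_mul η))
    (fun x hx => by linear_combination hL x hx.1 + η * exp (s * x) * hroot) (by positivity) hR
    u ⟨hu, hRu⟩
  simpa [G, η, div_mul_cancel₀ _ (exp_pos (s * u)).ne'] using this

section Comparison

variable {a b c C M r : ℝ} {f f' f'' : ℝ → ℝ}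

theorem le_barrier_Ici (ha : 0 < a) (hc : 0 ≤ c) (hC : 0 ≤ C) (hk : c ^ 2 - b * c - a ≠ 0)
    (hr : r ^ 2 + b * r - a = 0)
    (hf : ∀ u, HasDerivAt f (f' u) u) (hf' : ∀ u, HasDerivAt f' (f'' u) u)
    (hM : ∀ u ≥ 0, |f u| ≤ M)
    (hest : ∀ u ≥ 0, -(C * exp (-c * u)) ≤ f'' u + b * f' u - a * f u) :
    ∀ u ≥ 0, f u ≤ -C / (c ^ 2 - b * c - a) * exp (-c * u)
      + (M + C / |c ^ 2 - b * c - a|) * exp (r * u) := by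
  set k := c ^ 2 - b * c - a
  set A := -C / k
  set B := M + C / |k|
  have hB : 0 ≤ B := add_nonneg ((abs_nonneg _).trans (hM 0 le_rfl)) (by positivity)
  have hAB : 0 ≤ A + C / |k| := by
    have := le_abs_self (C / k)
    rw [abs_div, abs_of_nonneg hC] at this
    simp only [A, neg_div]
    linarith
  have hAk : A * k = -C := div_mul_cancel₀ _ hk
  have hbdd : BddBelow ((fun u => A * exp (-c * u) + B * exp (r * u) - f u) '' Ici 0) := by
    refine ⟨-|A| - M, ?_⟩
    rintro _ ⟨u, hu, rfl⟩
    have he₁ : exp (-c * u) ≤ 1 := exp_le_one_iff.2 (by nlinarith [mem_Ici.1 hu])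
    have hAe : -|A| ≤ A * exp (-c * u) := by
      nlinarith [neg_abs_le A, abs_nonneg A, exp_pos (-c * u)]
    have hBe : 0 ≤ B * exp (r * u) := by positivity
    linarith [(abs_le.1 (hM u hu)).2]
  have hsuper := min_principle_Ici ha (b := b)
    (g := fun u => A * exp (-c * u) + B * exp (r * u) - f u)
    (fun u => (((hasDerivAt_exp_const_mul (-c) u).const_mul A).add
      ((hasDerivAt_exp_const_mul r u).const_mul B)).sub (hf u))
    (fun u => ((((hasDerivAt_exp_const_mul (-c) u).const_mul (-c)).const_mul A).add
      (((hasDerivAt_exp_const_mul r u).const_mul r).const_mul B)).sub (hf' u))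
    hbdd
    (fun u hu => by
      linear_combination hest u hu.le + exp (-c * u) * hAk + B * exp (r * u) * hr
        - A * exp (-c * u) * (rfl : k = c ^ 2 - b * c - a))
    (by simp only [mul_zero, exp_zero, mul_one]; linarith [(abs_le.1 (hM 0 le_rfl)).2])
  exact fun u hu => sub_nonneg.1 (hsuper u hu)

theorem abs_le_barrier_Ici (ha : 0 < a) (hc : 0 ≤ c) (hC : 0 ≤ C) (hk : c ^ 2 - b * c - a ≠ 0)
    (hr : r ^ 2 + b * r - a = 0)
    (hf : ∀ u, HasDerivAt f (f' u) u) (hf' : ∀ u, HasDerivAt f' (f'' u) u)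
    (hM : ∀ u ≥ 0, |f u| ≤ M)
    (hest : ∀ u ≥ 0, |f'' u + b * f' u - a * f u| ≤ C * exp (-c * u)) :
    ∀ u ≥ 0, |f u| ≤ -C / (c ^ 2 - b * c - a) * exp (-c * u)
      + (M + C / |c ^ 2 - b * c - a|) * exp (r * u) := by
  have hupper := le_barrier_Ici ha hc hC hk hr hf hf' hM
    fun u hu => (abs_le.1 (hest u hu)).1
  have hlower := le_barrier_Ici ha hc hC hk hr (f := fun x => -f x) (fun u => (hf u).neg)
    (fun u => (hf' u).neg) (fun u hu => (abs_neg (f u)).trans_le (hM u hu))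
    fun u hu => by linarith [(abs_le.1 (hest u hu)).2]
  exact fun u hu => abs_le.2 ⟨neg_le.1 (hlower u hu), hupper u hu⟩

end Comparison

theorem tendsto_zero_of_abs_le_exp_add_exp {ι : Type*} {l : Filter ι} {f p q : ι → ℝ} {A B : ℝ}
    (hp : Tendsto p l atBot) (hq : Tendsto q l atBot)
    (hf : ∀ᶠ x in l, |f x| ≤ A * exp (p x) + B * exp (q x)) : Tendsto f l (𝓝 0) :=
  squeeze_zero_norm' hf <| by
    simpa using ((tendsto_exp_atBot.comp hp).const_mul A).add
      ((tendsto_exp_atBot.comp hq).const_mul B)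

/-- linear comparison lemma: if `δ` is `C²`, bounded on `ℝ`, with
`|δ'' + δ' − 2δ| ≤ C e^{−α|u|}` (with `0 < α`, `α ≠ 1, 2`), then `|δ|` decays like
`A e^{αu} + B e^{u}` at `−∞` and like `A' e^{−αu} + B' e^{−2u}` at `+∞`; in particular
`δ(u) → 0` as `u → ±∞`. -/
theorem stmt16 (α C : ℝ) (hα : 0 < α) (hα1 : α ≠ 1) (hα2 : α ≠ 2) (hC : 0 < C)
    (δ d d2 : ℝ → ℝ)
    (hd : ∀ u : ℝ, HasDerivAt δ (d u) u)
    (hd2 : ∀ u : ℝ, HasDerivAt d (d2 u) u)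
    (hbd : ∃ M : ℝ, ∀ u : ℝ, |δ u| ≤ M)
    (hest : ∀ u : ℝ, |d2 u + d u - 2 * δ u| ≤ C * Real.exp (-α * |u|)) :
    (∃ A B : ℝ, ∀ᶠ u in atBot, |δ u| ≤ A * Real.exp (α * u) + B * Real.exp u) ∧
    (∃ A' B' : ℝ, ∀ᶠ u in atTop, |δ u| ≤ A' * Real.exp (-α * u) + B' * Real.exp (-2 * u)) ∧
    Tendsto δ atBot (nhds 0) ∧ Tendsto δ atTop (nhds 0) := by
  obtain ⟨M, hM⟩ := hbd
  have hk_top : α ^ 2 - 1 * α - 2 ≠ 0 := by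
    have : (α - 2) * (α + 1) ≠ 0 := mul_ne_zero (sub_ne_zero.2 hα2) (by linarith)
    convert this using 1; ring
  have hk_bot : α ^ 2 - -1 * α - 2 ≠ 0 := by
    have : (α - 1) * (α + 2) ≠ 0 := mul_ne_zero (sub_ne_zero.2 hα1) (by linarith)
    convert this using 1; ring
  have htop := abs_le_barrier_Ici (r := -2) two_pos hα.le hC.le hk_top (by norm_num) hd hd2
    (fun u _ => hM u) fun u hu => by simpa [abs_of_nonneg hu] using hest u
  have hbot := abs_le_barrier_Ici (r := -1) (f := fun x => δ (-x)) (f' := fun x => -d (-x))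
    (f'' := fun x => d2 (-x)) two_pos hα.le hC.le hk_bot (by norm_num)
    (fun u => by simpa [Function.comp_def] using (hd (-u)).comp u (hasDerivAt_neg u))
    (fun u => by
      simpa [Function.comp_def, Pi.neg_def] using ((hd2 (-u)).comp u (hasDerivAt_neg u)).neg)
    (fun u _ => hM (-u)) fun u hu => by simpa [abs_of_nonneg hu] using hest (-u)
  have hbound_bot : ∀ᶠ u in atBot, |δ u| ≤ -C / (α ^ 2 - -1 * α - 2) * exp (α * u)
      + (M + C / |α ^ 2 - -1 * α - 2|) * exp u :=
    eventually_atBot.2 ⟨0, fun u hu => by simpa using hbot (-u) (by linarith)⟩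
  have hbound_top : ∀ᶠ u in atTop, |δ u| ≤ -C / (α ^ 2 - 1 * α - 2) * exp (-α * u)
      + (M + C / |α ^ 2 - 1 * α - 2|) * exp (-2 * u) :=
    eventually_atTop.2 ⟨0, htop⟩
  refine ⟨⟨_, _, hbound_bot⟩, ⟨_, _, hbound_top⟩, ?_, ?_⟩
  · exact tendsto_zero_of_abs_le_exp_add_exp (tendsto_id.const_mul_atBot hα) tendsto_id
      hbound_bot
  · exact tendsto_zero_of_abs_le_exp_add_exp (tendsto_id.const_mul_atTop_of_neg (neg_lt_zero.2 hα))
      (tendsto_id.const_mul_atTop_of_neg (by norm_num)) hbound_top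
end
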